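/- Let Y ∈ S = T \ (U_1 ∪ U_2), let X ∈ A_Y (i.e., ‖x_i − y_i‖ < ε(Y) for all i ∈ N), and let K ∈ {A,B}. Then every maximal clique C of the δ_K-proximity graph G_{δ_K}(X) with C ∩ N_mn ≠ ∅ satisfies: |C ∩ N_mn| ≤ |C ∩ N_mj| (so the clique's minority side C_mn = C ∩ N_mn consists of globally minority agents and C_mj = C ∩ N_mj of globally majority agents), and α_Y(j) ∈ C ∩ N_mj for every j ∈ C ∩ N_mn. -/

import Mathlib

/-- Group A: agents `1,…,n_A` (zero-indexed: `i < n_A`). -/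
def grpA (n nA : ℕ) : Finset (Fin n) := Finset.univ.filter fun i => (i : ℕ) < nA

/-- Group B: agents `n_A+1,…,n` (zero-indexed: `n_A ≤ i`). -/
def grpB (n nA : ℕ) : Finset (Fin n) := Finset.univ.filter fun i => nA ≤ (i : ℕ)

/-- `N_mn`, `N_mj` is an admissible minority/majority assignment of the two groups:
one of them is group A and the other group B, and the minority one has at most as many
agents as the majority one. -/
def MinorityMajority (n nA : ℕ) (Nmn Nmj : Finset (Fin n)) : Prop :=
  (Nmn = grpA n nA ∧ Nmj = grpB n nA ∧ (grpA n nA).card ≤ (grpB n nA).card) ∨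
  (Nmn = grpB n nA ∧ Nmj = grpA n nA ∧ (grpB n nA).card ≤ (grpA n nA).card)

/-- `α` is a one-to-one (injective) map from `Nmn` into `Nmj`. -/
def IsMatching {n : ℕ} (Nmn Nmj : Finset (Fin n)) (α : Fin n → Fin n) : Prop :=
  Set.InjOn α ↑Nmn ∧ ∀ i ∈ Nmn, α i ∈ Nmj

/-- The matching cost `‖[y_j]_{j∈Nmn} − [y_{α(j)}]_{j∈Nmn}‖` (Frobenius norm). -/
noncomputable def matchCost {d n : ℕ} (Nmn : Finset (Fin n))
    (Y : Fin n → EuclideanSpace ℝ (Fin d)) (α : Fin n → Fin n) : ℝ :=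
  Real.sqrt (∑ j ∈ Nmn, ‖Y j - Y (α j)‖ ^ 2)

/-- `α` is a minimizer of the matching cost over all injective maps `Nmn → Nmj`. -/
def IsMinMatching {d n : ℕ} (Nmn Nmj : Finset (Fin n))
    (Y : Fin n → EuclideanSpace ℝ (Fin d)) (α : Fin n → Fin n) : Prop :=
  IsMatching Nmn Nmj α ∧
    ∀ β, IsMatching Nmn Nmj β → matchCost Nmn Y α ≤ matchCost Nmn Y β

/-- The target set `T` of matched configurations. -/
def targetT {d n : ℕ} (Nmn Nmj : Finset (Fin n)) :
    Set (Fin n → EuclideanSpace ℝ (Fin d)) :=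
  {Y | ∃ α, IsMatching Nmn Nmj α ∧ ∀ i ∈ Nmn, Y i = Y (α i)}

/-- `U_1`: configurations in which two distinct majority agents coincide. -/
def setU1 {d n : ℕ} (Nmj : Finset (Fin n)) : Set (Fin n → EuclideanSpace ℝ (Fin d)) :=
  {Y | ∃ i ∈ Nmj, ∃ j ∈ Nmj, i ≠ j ∧ Y i = Y j}

/-- `U_2`: configurations in which some minority-majority pair is exactly at distance
`δ_A` or `δ_B`. -/
def setU2 {d n : ℕ} (δA δB : ℝ) (Nmn Nmj : Finset (Fin n)) :
    Set (Fin n → EuclideanSpace ℝ (Fin d)) :=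
  {Y | ∃ i ∈ Nmn, ∃ j ∈ Nmj, ‖Y i - Y j‖ = δA ∨ ‖Y i - Y j‖ = δB}

/-- `ε(Y) = min{ε_0(Y), ε_A(Y), ε_B(Y), δ_B/2}` with
`ε_0(Y) = (1/6) min{‖y_i − y_j‖ : i ∈ N_mn, j ∈ N_mj, j ≠ α_Y(i)}` and
`ε_K(Y) = (1/2) min{|δ_K − ‖y_i − y_j‖| : i ∈ N_mn, j ∈ N_mj, j ≠ α_Y(i)}`,
`K = A, B`, where minima over the empty set are interpreted as `+∞` (implemented by
taking the minimum of all listed quantities together with `δ_B/2`). -/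
noncomputable def epsY {d n : ℕ} (δA δB : ℝ) (Nmn Nmj : Finset (Fin n))
    (αY : Fin n → Fin n) (Y : Fin n → EuclideanSpace ℝ (Fin d)) : ℝ :=
  (insert (δB / 2)
    ((((Nmn ×ˢ Nmj).filter fun p => p.2 ≠ αY p.1).image
        fun p => (1 / 6 : ℝ) * ‖Y p.1 - Y p.2‖) ∪
      (((Nmn ×ˢ Nmj).filter fun p => p.2 ≠ αY p.1).image
        fun p => (1 / 2 : ℝ) * |δA - ‖Y p.1 - Y p.2‖|) ∪
      (((Nmn ×ˢ Nmj).filter fun p => p.2 ≠ αY p.1).image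
        fun p => (1 / 2 : ℝ) * |δB - ‖Y p.1 - Y p.2‖|))).min'
    (Finset.insert_nonempty _ _)

/-- `C` is a clique of the `δ`-proximity graph `G_δ(X)`: any two distinct nodes of `C`
are within distance `δ`. -/
def IsPCl {d n : ℕ} (δ : ℝ) (X : Fin n → EuclideanSpace ℝ (Fin d))
    (C : Finset (Fin n)) : Prop :=
  ∀ i ∈ C, ∀ j ∈ C, i ≠ j → ‖X i - X j‖ ≤ δ

/-- `C` is a maximal clique of the `δ`-proximity graph `G_δ(X)`. -/
def IsMaxPCl {d n : ℕ} (δ : ℝ) (X : Fin n → EuclideanSpace ℝ (Fin d))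
    (C : Finset (Fin n)) : Prop :=
  IsPCl δ X C ∧ ∀ C', IsPCl δ X C' → C ⊆ C' → C' = C


private lemma tri4' {E : Type*} [NormedAddCommGroup E] (a b c d : E) :
    ‖a - d‖ ≤ ‖a - b‖ + ‖b - c‖ + ‖c - d‖ := by
  have h : a - d = (a - b) + (b - c) + (c - d) := by abel
  rw [h]
  exact norm_add₃_le

/-- Let `Y ∈ S`, `X ∈ A_Y`, `K ∈ {A,B}`.  Every maximal clique `C` of `G_{δ_K}(X)` with
`C ∩ N_mn ≠ ∅` satisfies `|C ∩ N_mn| ≤ |C ∩ N_mj|`, and `α_Y(j) ∈ C ∩ N_mj` for every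
`j ∈ C ∩ N_mn`. -/
theorem maximal_clique_structure_on_AY
    {d n : ℕ} (nA : ℕ) (hnA : 0 < nA) (hnAn : nA < n)
    (δA δB : ℝ) (hB : 0 < δB) (hAB : δB < δA)
    (Nmn Nmj : Finset (Fin n)) (hmm : MinorityMajority n nA Nmn Nmj)
    (Y : Fin n → EuclideanSpace ℝ (Fin d))
    (hY : Y ∈ targetT Nmn Nmj \ (setU1 Nmj ∪ setU2 δA δB Nmn Nmj))
    (αY : Fin n → Fin n) (hαY : IsMinMatching Nmn Nmj Y αY)
    (X : Fin n → EuclideanSpace ℝ (Fin d))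
    (hX : ∀ i, ‖X i - Y i‖ < epsY δA δB Nmn Nmj αY Y)
    (δK : ℝ) (hK : δK = δA ∨ δK = δB)
    (C : Finset (Fin n)) (hC : IsMaxPCl δK X C) (hCne : (C ∩ Nmn).Nonempty) :
    (C ∩ Nmn).card ≤ (C ∩ Nmj).card ∧
    ∀ j ∈ C ∩ Nmn, αY j ∈ C ∩ Nmj := by
  obtain ⟨hYT, hYU⟩ := hY
  obtain ⟨α, hα, hαfix⟩ := hYT
  have hU1 : ¬ ∃ i ∈ Nmj, ∃ j ∈ Nmj, i ≠ j ∧ Y i = Y j := fun h => hYU (Or.inl h)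
  have hU2 : ¬ ∃ i ∈ Nmn, ∃ j ∈ Nmj, ‖Y i - Y j‖ = δA ∨ ‖Y i - Y j‖ = δB :=
    fun h => hYU (Or.inr h)
  -- the minimal matching is exact: Y j = Y (αY j) on Nmn
  have hcost0 : matchCost Nmn Y α = 0 := by
    unfold matchCost
    have : (∑ j ∈ Nmn, ‖Y j - Y (α j)‖ ^ 2) = 0 :=
      Finset.sum_eq_zero fun j hj => by simp [hαfix j hj]
    rw [this, Real.sqrt_zero]
  have hmin : matchCost Nmn Y αY ≤ 0 := hcost0 ▸ hαY.2 α hα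
  have hsum0 : (∑ j ∈ Nmn, ‖Y j - Y (αY j)‖ ^ 2) = 0 := by
    have hnn : (0:ℝ) ≤ ∑ j ∈ Nmn, ‖Y j - Y (αY j)‖ ^ 2 :=
      Finset.sum_nonneg fun _ _ => sq_nonneg _
    have h0 : matchCost Nmn Y αY = 0 :=
      le_antisymm hmin (Real.sqrt_nonneg _)
    unfold matchCost at h0
    have := Real.sqrt_eq_zero'.mp h0
    linarith
  have hfix : ∀ j ∈ Nmn, Y j = Y (αY j) := by
    intro j hj
    have h1 := (Finset.sum_eq_zero_iff_of_nonneg (fun i _ => sq_nonneg _)).mp hsum0 j hj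
    have h2 : ‖Y j - Y (αY j)‖ = 0 := by
      have := pow_eq_zero_iff (n := 2) (by norm_num) |>.mp h1
      exact this
    rw [norm_eq_zero, sub_eq_zero] at h2
    exact h2
  -- group structure
  have hABiff : ∀ i : Fin n, i ∈ grpA n nA ↔ i ∉ grpB n nA := by
    intro i
    simp only [grpA, grpB, Finset.mem_filter, Finset.mem_univ, true_and]
    exact lt_iff_not_ge
  have hcover : ∀ i : Fin n, i ∈ Nmn ∨ i ∈ Nmj := by
    intro i
    rcases hmm with ⟨h1, h2, _⟩ | ⟨h1, h2, _⟩ <;> subst h1 <;> subst h2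
    · by_cases h : i ∈ grpA n nA
      · exact Or.inl h
      · exact Or.inr (not_not.mp (fun hh => h ((hABiff i).mpr hh)))
    · by_cases h : i ∈ grpA n nA
      · exact Or.inr h
      · exact Or.inl (not_not.mp (fun hh => h ((hABiff i).mpr hh)))
  have hdisj : ∀ i : Fin n, i ∈ Nmn → i ∉ Nmj := by
    intro i hi
    rcases hmm with ⟨h1, h2, _⟩ | ⟨h1, h2, _⟩ <;> subst h1 <;> subst h2
    · exact (hABiff i).mp hi
    · exact fun hh => (hABiff i).mp hh hi
  set ε := epsY δA δB Nmn Nmj αY Y with hε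
  have hεpos : 0 < ε := by
    rw [hε]; unfold epsY
    apply (Finset.lt_min'_iff _ _).mpr
    intro b hb
    rw [Finset.mem_insert] at hb
    rcases hb with rfl | hb
    · linarith
    rw [Finset.mem_union, Finset.mem_union] at hb
    rcases hb with (hb | hb) | hb
    · obtain ⟨p, hp, rfl⟩ := Finset.mem_image.mp hb
      obtain ⟨hp1, hne⟩ := Finset.mem_filter.mp hp
      obtain ⟨hi, hj⟩ := Finset.mem_product.mp hp1
      have hne0 : Y p.1 ≠ Y p.2 := by
        intro h
        exact hU1 ⟨αY p.1, hαY.1.2 p.1 hi, p.2, hj, fun hh => hne hh.symm,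
          by rw [← hfix p.1 hi, h]⟩
      have h1 : (0:ℝ) < ‖Y p.1 - Y p.2‖ := norm_sub_pos_iff.mpr hne0
      linarith
    · obtain ⟨p, hp, rfl⟩ := Finset.mem_image.mp hb
      obtain ⟨hp1, hne⟩ := Finset.mem_filter.mp hp
      obtain ⟨hi, hj⟩ := Finset.mem_product.mp hp1
      have h1 : (0:ℝ) < |δA - ‖Y p.1 - Y p.2‖| :=
        abs_pos.mpr (sub_ne_zero.mpr fun h => hU2 ⟨p.1, hi, p.2, hj, Or.inl h.symm⟩)
      linarith
    · obtain ⟨p, hp, rfl⟩ := Finset.mem_image.mp hb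
      obtain ⟨hp1, hne⟩ := Finset.mem_filter.mp hp
      obtain ⟨hi, hj⟩ := Finset.mem_product.mp hp1
      have h1 : (0:ℝ) < |δB - ‖Y p.1 - Y p.2‖| :=
        abs_pos.mpr (sub_ne_zero.mpr fun h => hU2 ⟨p.1, hi, p.2, hj, Or.inr h.symm⟩)
      linarith
  have hεδB : ε ≤ δB / 2 := by
    rw [hε]; exact Finset.min'_le _ _ (Finset.mem_insert_self _ _)
  have hδBK : δB ≤ δK := by rcases hK with rfl | rfl <;> linarith
  have hgap : ∀ i ∈ Nmn, ∀ j ∈ Nmj, j ≠ αY i → 2 * ε ≤ |δK - ‖Y i - Y j‖| := by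
    intro i hi j hj hne
    have hmemf : (i, j) ∈ (Nmn ×ˢ Nmj).filter fun p => p.2 ≠ αY p.1 :=
      Finset.mem_filter.mpr ⟨Finset.mem_product.mpr ⟨hi, hj⟩, hne⟩
    rcases hK with rfl | rfl
    · have : ε ≤ (1 / 2 : ℝ) * |δK - ‖Y i - Y j‖| := by
        rw [hε]
        apply Finset.min'_le
        exact Finset.mem_insert_of_mem (Finset.mem_union_left _
          (Finset.mem_union_right _ (Finset.mem_image.mpr ⟨(i, j), hmemf, rfl⟩)))
      linarith
    · have : ε ≤ (1 / 2 : ℝ) * |δK - ‖Y i - Y j‖| := by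
        rw [hε]
        apply Finset.min'_le
        exact Finset.mem_insert_of_mem (Finset.mem_union_right _
          (Finset.mem_image.mpr ⟨(i, j), hmemf, rfl⟩))
      linarith
  have hfar : ∀ i ∈ Nmn, ∀ j ∈ Nmj, j ≠ αY i → ‖Y i - Y j‖ < δK + 2 * ε →
      ‖Y i - Y j‖ ≤ δK - 2 * ε := by
    intro i hi j hj hne hlt
    have h := hgap i hi j hj hne
    rcases le_or_gt ‖Y i - Y j‖ δK with h2 | h2
    · rw [abs_of_nonneg (by linarith)] at h; linarith
    · rw [abs_of_nonpos (by linarith)] at h; linarith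
  -- the key extension step
  have hkey : ∀ j ∈ C ∩ Nmn, αY j ∈ C := by
    intro j hjC'
    rw [Finset.mem_inter] at hjC'
    obtain ⟨hjC, hjmn⟩ := hjC'
    have hYj : Y j = Y (αY j) := hfix j hjmn
    have hside : ∀ i ∈ C, i ≠ αY j → ‖X (αY j) - X i‖ ≤ δK := by
      intro i hiC hine
      rcases hcover i with himn | himj
      · by_cases hαij : αY i = αY j
        · have hij : i = j := hαY.1.1 (Finset.mem_coe.mpr himn) (Finset.mem_coe.mpr hjmn) hαij
          subst hij
          have ht := tri4' (X (αY i)) (Y (αY i)) (Y i) (X i)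
          have h1 := hX (αY i)
          have h2 := hX i
          have h3 : ‖Y (αY i) - Y i‖ = 0 := by rw [← hfix i himn]; simp
          rw [norm_sub_rev] at h2
          linarith
        · have hij : i ≠ j := fun h => hαij (by rw [h])
          have hlt : ‖Y i - Y (αY j)‖ < δK + 2 * ε := by
            have ht := tri4' (Y i) (X i) (X j) (Y j)
            have h1 := hX i
            have h2 := hX j
            have h3 := hC.1 i hiC j hjC hij
            rw [norm_sub_rev] at h1
            rw [← hYj]
            linarith
          have hfar' := hfar i himn (αY j) (hαY.1.2 j hjmn)
            (fun h => hαij h.symm) hlt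
          have ht := tri4' (X (αY j)) (Y (αY j)) (Y i) (X i)
          have h1 := hX (αY j)
          have h2 := hX i
          rw [norm_sub_rev] at h2
          rw [norm_sub_rev (Y (αY j))] at ht
          linarith
      · have hij : i ≠ j := fun h => hdisj j hjmn (h ▸ himj)
        have hlt : ‖Y j - Y i‖ < δK + 2 * ε := by
          have ht := tri4' (Y j) (X j) (X i) (Y i)
          have h1 := hX j
          have h2 := hX i
          have h3 := hC.1 j hjC i hiC hij.symm
          rw [norm_sub_rev] at h1
          linarith
        have hfar' := hfar j hjmn i himj hine hlt
        have ht := tri4' (X (αY j)) (Y (αY j)) (Y i) (X i)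
        have h1 := hX (αY j)
        have h2 := hX i
        rw [norm_sub_rev] at h2
        rw [← hYj] at h1
        rw [← hYj] at ht
        linarith
    have hclq : IsPCl δK X (insert (αY j) C) := by
      intro a ha b hb hab
      rcases Finset.mem_insert.mp ha with rfl | haC
      · rcases Finset.mem_insert.mp hb with rfl | hbC
        · exact absurd rfl hab
        · exact hside b hbC (fun h => hab h.symm)
      · rcases Finset.mem_insert.mp hb with rfl | hbC
        · rw [norm_sub_rev]; exact hside a haC hab
        · exact hC.1 a haC b hbC hab
    have heq := hC.2 _ hclq (Finset.subset_insert _ _)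
    rw [← heq]
    exact Finset.mem_insert_self _ _
  have hmap : ∀ j ∈ C ∩ Nmn, αY j ∈ C ∩ Nmj := by
    intro j hj
    exact Finset.mem_inter.mpr ⟨hkey j hj, hαY.1.2 j (Finset.mem_inter.mp hj).2⟩
  refine ⟨?_, hmap⟩
  apply Finset.card_le_card_of_injOn αY hmap
  intro a ha b hb h
  exact hαY.1.1 (Finset.mem_coe.mpr (Finset.mem_inter.mp ha).2)
    (Finset.mem_coe.mpr (Finset.mem_inter.mp hb).2) h
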